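/- For n >= 3, no preference profile satisfies both m-MaxProp (maximum proposals under men-proposing DA) and w-MaxProp (maximum proposals under women-proposing DA). -/

import Mathlib

open scoped Classical

noncomputable section

/-- A two-sided matching market with `n` men and `n` women, each with a complete
strict preference order over the other side. `mpref m k` is man `m`'s `k`-th
favourite woman (0 = top), and `wpref w k` is woman `w`'s `k`-th favourite man. -/
structure Profile (n : ℕ) where
  mpref : Fin n → (Fin n ≃ Fin n)
  wpref : Fin n → (Fin n ≃ Fin n)

namespace Profile

variable {n : ℕ}

/-- rank (0 = best) of woman `w` in man `m`'s preference list -/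
def mrank (P : Profile n) (m w : Fin n) : ℕ := ((P.mpref m).symm w : ℕ)

/-- rank (0 = best) of man `m` in woman `w`'s preference list -/
def wrank (P : Profile n) (w m : Fin n) : ℕ := ((P.wpref w).symm m : ℕ)

/-- man `m` strictly prefers woman `w` to woman `w'` -/
def mPrefers (P : Profile n) (m w w' : Fin n) : Prop := P.mrank m w < P.mrank m w'

/-- woman `w` strictly prefers man `m` to man `m'` -/
def wPrefers (P : Profile n) (w m m' : Fin n) : Prop := P.wrank w m < P.wrank w m'

/-- top choice of man `m` -/
def topM (P : Profile n) (m : Fin n) : Fin n := P.mpref m ⟨0, m.pos⟩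

/-- top choice of woman `w` -/
def topW (P : Profile n) (w : Fin n) : Fin n := P.wpref w ⟨0, w.pos⟩

/-- the profile with the roles of men and women exchanged -/
def swap (P : Profile n) : Profile n := ⟨P.wpref, P.mpref⟩

/-- State of the men-proposing deferred acceptance algorithm:
`next m` = number of proposals man `m` has made so far,
`held w` = the man woman `w` currently tentatively holds (if any). -/
structure DAState (n : ℕ) where
  next : Fin n → ℕ
  held : Fin n → Option (Fin n)

def initState (n : ℕ) : DAState n := ⟨fun _ => 0, fun _ => none⟩

/-- the men currently unmatched (held by no woman) -/
def unmatched (s : DAState n) : Finset (Fin n) :=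
  Finset.univ.filter fun m => ∀ w : Fin n, s.held w ≠ some m

/-- the woman man `m` proposes to next: his most preferred woman among those
who have not rejected him yet -/
def target (P : Profile n) (s : DAState n) (m : Fin n) : Fin n :=
  P.mpref m ⟨s.next m % n, Nat.mod_lt _ m.pos⟩

/-- the men proposing to woman `w` in the current round -/
def proposers (P : Profile n) (s : DAState n) (w : Fin n) : Finset (Fin n) :=
  (unmatched s).filter fun m => target P s m = w

/-- one round of the men-proposing deferred acceptance algorithm: every
unmatched man proposes to his favourite woman who has not rejected him yet,
and every woman tentatively holds her favourite among her current partner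
and the new proposers, rejecting the rest -/
def step (P : Profile n) (s : DAState n) : DAState n where
  next := fun m => if m ∈ unmatched s then s.next m + 1 else s.next m
  held := fun w => ((proposers P s w ∪ (s.held w).toFinset).toList).argmin (P.wrank w)

/-- the state after `k` rounds of men-proposing deferred acceptance -/
def stateAt (P : Profile n) (k : ℕ) : DAState n := (step P)^[k] (initState n)

/-- the final state of men-proposing deferred acceptance
(`n * n + 1` iterations is always enough to reach the fixed point) -/
def finalState (P : Profile n) : DAState n := stateAt P (n * n + 1)

/-- total number of proposals made during the men-proposing DA -/
def totalProposals (P : Profile n) : ℕ := ∑ m : Fin n, (finalState P).next m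

/-- number of rounds of the men-proposing DA (rounds in which some proposal is made) -/
def rounds (P : Profile n) : ℕ :=
  ((Finset.range (n * n + 1)).filter fun k => (unmatched (stateAt P k)).Nonempty).card

/-- total number of proposals received by woman `w` during the men-proposing DA -/
def proposalsTo (P : Profile n) (w : Fin n) : ℕ :=
  ∑ k ∈ Finset.range (n * n + 1), (proposers P (stateAt P k) w).card

/-- man `m` proposes to woman `w` at some point during the men-proposing DA -/
def proposedTo (P : Profile n) (m w : Fin n) : Prop :=
  ∃ k < n * n + 1, m ∈ proposers P (stateAt P k) w

/-- the men-proposing DA makes the maximum possible number `n² - n + 1` of proposals -/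
def MaxProp (P : Profile n) : Prop := P.totalProposals = n * n + 1 - n

/-- the men-proposing DA takes the maximum possible number `n² - 2n + 2` of rounds -/
def MaxRou (P : Profile n) : Prop := P.rounds = n * n + 2 - 2 * n

/-- a matching (a bijection man ↦ woman) is stable iff no man-woman pair mutually
prefer each other to their assigned partners -/
def Stable (P : Profile n) (μ : Fin n ≃ Fin n) : Prop :=
  ¬ ∃ (m w : Fin n), P.mPrefers m w (μ m) ∧ P.wPrefers w m (μ.symm w)

/-- the profile admits a unique stable matching -/
def USM (P : Profile n) : Prop := ∃! μ : Fin n ≃ Fin n, P.Stable μ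

/-- the sequential preference condition of Eeckhout (2000) -/
def SPC (P : Profile n) : Prop :=
  ∃ σ τ : Equiv.Perm (Fin n), ∀ i j : Fin n, i < j →
    P.mPrefers (σ i) (τ i) (τ j) ∧ P.wPrefers (τ i) (σ i) (σ j)

/-- the no crossing condition of Clark (2006) -/
def NCC (P : Profile n) : Prop :=
  ∃ σ τ : Equiv.Perm (Fin n), ∀ i j k l : Fin n, i < j → k < l →
    (P.mPrefers (σ i) (τ l) (τ k) → P.mPrefers (σ j) (τ l) (τ k)) ∧
    (P.wPrefers (τ k) (σ j) (σ i) → P.wPrefers (τ l) (σ j) (σ i))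

end Profile

/-!
In men-proposing deferred acceptance a man proposes down his list until he reaches his final
partner, so the number of proposals is `n + ∑ₘ rank_m (μ m)` for the resulting matching `μ`,
and m-MaxProp says that this rank sum is `(n - 1)²`. Dually, w-MaxProp says that the women's
rank sum of the women-proposing matching `ν` is `(n - 1)²`. For a stable matching `ν`, the pairs
`(m, w)` where `m` prefers `w` to `ν m` and those where `w` prefers `m` to `ν⁻¹ w` are disjoint
and avoid the `n` pairs of `ν`, so the men's and the women's rank sums of `ν` add up to at most
`n² - n`. As `μ` is men-optimal, the men's rank sum of `μ` is at most that of `ν`. Together,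
`2 (n - 1)² ≤ n (n - 1)`, which forces `n ≤ 2`.
-/

namespace Profile

open Finset

variable {n : ℕ} {P : Profile n} {s : DAState n} {m m' w w' : Fin n}

lemma mrank_lt (P : Profile n) (m w : Fin n) : P.mrank m w < n := ((P.mpref m).symm w).isLt

lemma mrank_injective (P : Profile n) (m : Fin n) : Function.Injective (P.mrank m) :=
  fun _ _ h => (P.mpref m).symm.injective (Fin.val_injective h)

lemma wrank_injective (P : Profile n) (w : Fin n) : Function.Injective (P.wrank w) :=
  fun _ _ h => (P.wpref w).symm.injective (Fin.val_injective h)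

@[simp]
lemma mrank_mpref (P : Profile n) (m j : Fin n) : P.mrank m (P.mpref m j) = j := by
  simp [mrank]

lemma mrank_swap (P : Profile n) : P.swap.mrank = P.wrank := rfl

lemma swap_stable_iff {ν : Fin n ≃ Fin n} : P.swap.Stable ν ↔ P.Stable ν.symm := by
  simp only [Stable, mPrefers, wPrefers, mrank_swap, Equiv.symm_symm]
  rw [exists_comm]
  exact not_congr (exists₂_congr fun _ _ => and_comm)

def candidates (P : Profile n) (s : DAState n) (w : Fin n) : Finset (Fin n) :=
  proposers P s w ∪ (s.held w).toFinset

lemma mem_unmatched : m ∈ unmatched s ↔ ∀ w, s.held w ≠ some m := by simp [unmatched]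

lemma notMem_unmatched : m ∉ unmatched s ↔ ∃ w, s.held w = some m := by
  simp [mem_unmatched]

lemma notMem_unmatched_of_held (h : s.held w = some m) : m ∉ unmatched s :=
  notMem_unmatched.2 ⟨w, h⟩

lemma mem_proposers : m ∈ proposers P s w ↔ m ∈ unmatched s ∧ target P s m = w := by
  simp [proposers]

lemma mem_candidates :
    m ∈ candidates P s w ↔ (m ∈ unmatched s ∧ target P s m = w) ∨ s.held w = some m := by
  simp [candidates, mem_proposers]

lemma step_next (P : Profile n) (s : DAState n) (m : Fin n) :
    (step P s).next m = if m ∈ unmatched s then s.next m + 1 else s.next m := rfl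

lemma step_held (P : Profile n) (s : DAState n) (w : Fin n) :
    (step P s).held w = (candidates P s w).toList.argmin (P.wrank w) := rfl

lemma mem_candidates_of_step_held (h : (step P s).held w = some m) : m ∈ candidates P s w := by
  rw [step_held] at h
  exact mem_toList.1 (List.argmin_mem h)

lemma wrank_le_of_step_held (h : (step P s).held w = some m) (hm' : m' ∈ candidates P s w) :
    P.wrank w m ≤ P.wrank w m' := by
  rw [step_held] at h
  exact List.le_of_mem_argmin (mem_toList.2 hm') h

lemma exists_step_held (hm : m ∈ candidates P s w) : ∃ m', (step P s).held w = some m' := by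
  rw [step_held, ← Option.ne_none_iff_exists', Ne, List.argmin_eq_none, toList_eq_nil]
  exact ne_empty_of_mem hm

lemma notMem_candidates_of_step_held (h : (step P s).held w = none) : m ∉ candidates P s w := by
  rw [step_held, List.argmin_eq_none, toList_eq_nil] at h
  simp [h]

/-- `s.next m` counts the proposals of `m`, so `P.mrank m w < s.next m` says that `m` has
proposed to `w`. -/
structure DAInv (P : Profile n) (s : DAState n) : Prop where
  next_of_held : ∀ m w, s.held w = some m → s.next m = P.mrank m w + 1
  held_inj : ∀ w w' m, s.held w = some m → s.held w' = some m → w = w'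
  next_le_of_held_eq_none : ∀ w, s.held w = none → ∀ m, s.next m ≤ P.mrank m w
  wrank_held_le : ∀ m w m', s.held w = some m → P.mrank m' w < s.next m' →
    P.wrank w m ≤ P.wrank w m'

namespace DAInv

variable (hs : DAInv P s)
include hs

lemma exists_held_eq_none (hm : m ∈ unmatched s) : ∃ w, s.held w = none := by
  by_contra! h
  choose f hf using fun w => Option.ne_none_iff_exists'.1 (h w)
  have hinj : Function.Injective f := fun w w' e => hs.held_inj w w' (f w) (hf w) (e ▸ hf w')
  obtain ⟨w, rfl⟩ := Finite.surjective_of_injective hinj m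
  exact mem_unmatched.1 hm w (hf w)

lemma next_lt_of_mem_unmatched (hm : m ∈ unmatched s) : s.next m < n := by
  obtain ⟨w, hw⟩ := hs.exists_held_eq_none hm
  exact (hs.next_le_of_held_eq_none w hw m).trans_lt (P.mrank_lt m w)

lemma mrank_target (hm : m ∈ unmatched s) : P.mrank m (target P s m) = s.next m := by
  rw [target, mrank_mpref]
  exact Nat.mod_eq_of_lt (hs.next_lt_of_mem_unmatched hm)

lemma next_le (m : Fin n) : s.next m ≤ n := by
  by_cases hm : m ∈ unmatched s
  · exact (hs.next_lt_of_mem_unmatched hm).le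
  · obtain ⟨w, hw⟩ := notMem_unmatched.1 hm
    rw [hs.next_of_held m w hw]
    exact P.mrank_lt m w

lemma sum_next_le : ∑ m, s.next m ≤ n * n :=
  calc ∑ m, s.next m ≤ ∑ _m : Fin n, n := sum_le_sum fun m _ => hs.next_le m
    _ = n * n := by simp

lemma target_eq_iff (hm : m ∈ unmatched s) : target P s m = w ↔ s.next m = P.mrank m w := by
  rw [← hs.mrank_target hm, (P.mrank_injective m).eq_iff]

lemma mem_candidates_of_next_eq (hm : m ∈ unmatched s) (h : s.next m = P.mrank m w) :
    m ∈ candidates P s w :=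
  mem_candidates.2 (Or.inl ⟨hm, (hs.target_eq_iff hm).2 h⟩)

lemma step_next_of_mem_candidates (h : m ∈ candidates P s w) :
    (step P s).next m = P.mrank m w + 1 := by
  rcases mem_candidates.1 h with ⟨hu, ht⟩ | hh
  · rw [step_next, if_pos hu, (hs.target_eq_iff hu).1 ht]
  · rw [step_next, if_neg (notMem_unmatched_of_held hh), hs.next_of_held m w hh]

lemma eq_of_mem_candidates (h : m ∈ candidates P s w) (h' : m ∈ candidates P s w') :
    w = w' := by
  rcases mem_candidates.1 h with ⟨hu, rfl⟩ | hh <;>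
    rcases mem_candidates.1 h' with ⟨hu', rfl⟩ | hh'
  · rfl
  · exact absurd hu (notMem_unmatched_of_held hh')
  · exact absurd hu' (notMem_unmatched_of_held hh)
  · exact hs.held_inj w w' m hh hh'

lemma exists_held_wrank_le (h : P.mrank m' w < s.next m') :
    ∃ m, s.held w = some m ∧ P.wrank w m ≤ P.wrank w m' := by
  rcases hw : s.held w with _ | m
  · exact absurd (hs.next_le_of_held_eq_none w hw m') h.not_ge
  · exact ⟨m, rfl, hs.wrank_held_le m w m' hw h⟩

lemma step_next_le_of_step_held_eq_none (h : (step P s).held w = none) (m : Fin n) :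
    (step P s).next m ≤ P.mrank m w := by
  have hw : s.held w = none := Option.eq_none_iff_forall_ne_some.2 fun _ hm =>
    notMem_candidates_of_step_held h (mem_candidates.2 (Or.inr hm))
  have hle := hs.next_le_of_held_eq_none w hw m
  rw [step_next]
  split_ifs with hu
  · have hne : s.next m ≠ P.mrank m w := fun he =>
      notMem_candidates_of_step_held h (hs.mem_candidates_of_next_eq hu he)
    omega
  · exact hle

lemma step_wrank_held_le (h : (step P s).held w = some m)
    (hm' : P.mrank m' w < (step P s).next m') : P.wrank w m ≤ P.wrank w m' := by
  by_cases hc : m' ∈ candidates P s w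
  · exact wrank_le_of_step_held h hc
  have hlt : P.mrank m' w < s.next m' := by
    rw [step_next] at hm'
    split_ifs at hm' with hu
    · have : s.next m' ≠ P.mrank m' w := fun he => hc (hs.mem_candidates_of_next_eq hu he)
      omega
    · exact hm'
  obtain ⟨m0, hm0, hle⟩ := hs.exists_held_wrank_le hlt
  exact (wrank_le_of_step_held h (mem_candidates.2 (Or.inr hm0))).trans hle

lemma step : DAInv P (step P s) where
  next_of_held _ _ h := hs.step_next_of_mem_candidates (mem_candidates_of_step_held h)
  held_inj _ _ _ h h' :=
    hs.eq_of_mem_candidates (mem_candidates_of_step_held h) (mem_candidates_of_step_held h')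
  next_le_of_held_eq_none _ h := hs.step_next_le_of_step_held_eq_none h
  wrank_held_le _ _ _ h := hs.step_wrank_held_le h

end DAInv

lemma stateAt_succ (P : Profile n) (k : ℕ) : stateAt P (k + 1) = step P (stateAt P k) :=
  Function.iterate_succ_apply' _ _ _

lemma daInv_stateAt (P : Profile n) (k : ℕ) : DAInv P (stateAt P k) := by
  induction k with
  | zero => constructor <;> simp [stateAt, initState]
  | succ k ih => rw [stateAt_succ]; exact ih.step

lemma step_eq_self_of_unmatched_eq_empty (h : unmatched s = ∅) : step P s = s := by
  obtain ⟨next, held⟩ := s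
  simp only [step, h, notMem_empty, if_false, proposers, filter_empty,
    empty_union, DAState.mk.injEq, true_and]
  funext w
  cases held w <;> simp

lemma sum_next_lt_sum_step_next (h : (unmatched s).Nonempty) :
    ∑ m, s.next m < ∑ m, (step P s).next m := by
  obtain ⟨m₀, hm₀⟩ := h
  refine sum_lt_sum (fun m _ => ?_) ⟨m₀, mem_univ _, by simp [step_next, hm₀]⟩
  rw [step_next]
  split_ifs <;> omega

lemma exists_unmatched_stateAt_eq_empty (P : Profile n) :
    ∃ k ≤ n * n, unmatched (stateAt P k) = ∅ := by
  by_contra! h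
  have hgrow : ∀ k ≤ n * n + 1, k ≤ ∑ m, (stateAt P k).next m := by
    intro k
    induction k with
    | zero => simp
    | succ k ih =>
      intro hk
      have hlt := sum_next_lt_sum_step_next (P := P) (h k (by omega))
      rw [stateAt_succ]
      have := ih (by omega)
      omega
  have := hgrow (n * n + 1) le_rfl
  have := (daInv_stateAt P (n * n + 1)).sum_next_le
  omega

lemma unmatched_finalState (P : Profile n) : unmatched (finalState P) = ∅ := by
  obtain ⟨k, hk, he⟩ := exists_unmatched_stateAt_eq_empty P
  have hfinal : finalState P = stateAt P k :=
    calc finalState P = (step P)^[n * n + 1 - k] (stateAt P k) := by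
          rw [finalState, stateAt, stateAt, ← Function.iterate_add_apply,
            Nat.sub_add_cancel (by omega)]
      _ = stateAt P k := Function.iterate_fixed (step_eq_self_of_unmatched_eq_empty he) _
  rw [hfinal, he]

lemma exists_equiv_held_finalState (P : Profile n) :
    ∃ μ : Fin n ≃ Fin n, ∀ m, (finalState P).held (μ m) = some m := by
  have hheld (m : Fin n) : ∃ w, (finalState P).held w = some m :=
    notMem_unmatched.1 (by simp [unmatched_finalState])
  choose f hf using hheld
  have hinj : Function.Injective f := fun m m' h =>
    Option.some_injective _ ((hf m).symm.trans (by rw [h]; exact hf m'))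
  exact ⟨Equiv.ofBijective f (Finite.injective_iff_bijective.1 hinj), hf⟩

def daMatching (P : Profile n) : Fin n ≃ Fin n := P.exists_equiv_held_finalState.choose

lemma finalState_held_daMatching (P : Profile n) (m : Fin n) :
    (finalState P).held (P.daMatching m) = some m :=
  P.exists_equiv_held_finalState.choose_spec m

lemma finalState_held (P : Profile n) (w : Fin n) :
    (finalState P).held w = some (P.daMatching.symm w) := by
  simpa using P.finalState_held_daMatching (P.daMatching.symm w)

lemma finalState_next (P : Profile n) (m : Fin n) :
    (finalState P).next m = P.mrank m (P.daMatching m) + 1 :=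
  (daInv_stateAt P _).next_of_held m _ (P.finalState_held_daMatching m)

lemma totalProposals_eq (P : Profile n) :
    P.totalProposals = ∑ m, P.mrank m (P.daMatching m) + n := by
  simp [totalProposals, finalState_next, sum_add_distrib]

lemma daMatching_stable (P : Profile n) : P.Stable P.daMatching := by
  rintro ⟨m, w, hm, hw⟩
  have hproposed : P.mrank m w < (finalState P).next m := by
    rw [finalState_next]
    exact Nat.lt_succ_of_lt hm
  exact ((daInv_stateAt P _).wrank_held_le _ w m (P.finalState_held w) hproposed).not_gt hw

/-- No man has been rejected by his partner in `ρ`. -/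
structure NotRejectedBy (P : Profile n) (ρ : Fin n ≃ Fin n) (s : DAState n) : Prop where
  next_le : ∀ m, s.next m ≤ P.mrank m (ρ m) + 1
  held_of_next_eq : ∀ m, s.next m = P.mrank m (ρ m) + 1 → s.held (ρ m) = some m

namespace NotRejectedBy

variable {ρ : Fin n ≃ Fin n} (hρ : NotRejectedBy P ρ s)
include hρ

lemma step_next_le (m : Fin n) : (step P s).next m ≤ P.mrank m (ρ m) + 1 := by
  rw [step_next]
  split_ifs with hu
  · have hne : s.next m ≠ P.mrank m (ρ m) + 1 := fun he =>
      mem_unmatched.1 hu _ (hρ.held_of_next_eq m he)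
    have := hρ.next_le m
    omega
  · exact hρ.next_le m

lemma mrank_lt_of_mem_candidates (hs : DAInv P s) (h : m ∈ candidates P s w) (hw : w ≠ ρ m) :
    P.mrank m w < P.mrank m (ρ m) := by
  have hle := hρ.step_next_le m
  rw [hs.step_next_of_mem_candidates h] at hle
  exact lt_of_le_of_ne (by omega) fun he => hw (P.mrank_injective m he)

lemma step_held_of_mem_candidates (hs : DAInv P s) (hstab : P.Stable ρ)
    (h : m ∈ candidates P s (ρ m)) : (step P s).held (ρ m) = some m := by
  obtain ⟨m', hm'⟩ := exists_step_held h
  by_contra hne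
  have hm'm : m' ≠ m := by rintro rfl; exact hne hm'
  refine hstab ⟨m', ρ m, hρ.mrank_lt_of_mem_candidates hs (mem_candidates_of_step_held hm')
    fun he => hm'm (ρ.injective he).symm, ?_⟩
  rw [wPrefers, Equiv.symm_apply_apply]
  exact lt_of_le_of_ne (wrank_le_of_step_held hm' h) fun he => hm'm (P.wrank_injective _ he)

lemma step (hs : DAInv P s) (hstab : P.Stable ρ) : NotRejectedBy P ρ (step P s) where
  next_le := hρ.step_next_le
  held_of_next_eq m he := by
    refine hρ.step_held_of_mem_candidates hs hstab ?_
    rw [step_next] at he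
    split_ifs at he with hu
    · exact hs.mem_candidates_of_next_eq hu (by omega)
    · exact mem_candidates.2 (Or.inr (hρ.held_of_next_eq m he))

end NotRejectedBy

lemma notRejectedBy_stateAt {ρ : Fin n ≃ Fin n} (hstab : P.Stable ρ) (k : ℕ) :
    NotRejectedBy P ρ (stateAt P k) := by
  induction k with
  | zero => constructor <;> simp [stateAt, initState]
  | succ k ih => rw [stateAt_succ]; exact ih.step (daInv_stateAt P k) hstab

lemma mrank_daMatching_le {ρ : Fin n ≃ Fin n} (hstab : P.Stable ρ) (m : Fin n) :
    P.mrank m (P.daMatching m) ≤ P.mrank m (ρ m) := by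
  have := (notRejectedBy_stateAt hstab (n * n + 1)).next_le m
  rw [← finalState, finalState_next] at this
  omega

lemma card_filter_lt_apply {α : Type*} [Fintype α] {k : ℕ} (r : α ≃ Fin k) (x : α) :
    #{y | r y < r x} = r x := by
  rw [← Fin.card_Iio (r x)]
  exact card_equiv r (by simp)

lemma card_mPrefers_partner (ν : Fin n ≃ Fin n) :
    #{p : Fin n × Fin n | P.mPrefers p.1 p.2 (ν p.1)} = ∑ m, P.mrank m (ν m) := by
  rw [card_filter, Fintype.sum_prod_type]
  refine sum_congr rfl fun m _ => ?_
  rw [← card_filter]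
  simp only [mPrefers, mrank, ← Fin.lt_def]
  exact card_filter_lt_apply (P.mpref m).symm (ν m)

lemma card_wPrefers_partner (ν : Fin n ≃ Fin n) :
    #{p : Fin n × Fin n | P.wPrefers p.2 p.1 (ν.symm p.2)} = ∑ w, P.wrank w (ν.symm w) := by
  rw [card_filter, Fintype.sum_prod_type_right]
  refine sum_congr rfl fun w _ => ?_
  rw [← card_filter]
  simp only [wPrefers, wrank, ← Fin.lt_def]
  exact card_filter_lt_apply (P.wpref w).symm (ν.symm w)

lemma card_ne_partner (ν : Fin n ≃ Fin n) :
    #{p : Fin n × Fin n | p.2 ≠ ν p.1} = n * n - n := by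
  rw [card_filter, Fintype.sum_prod_type]
  simp_rw [← card_filter, filter_ne', card_erase_of_mem (mem_univ _), card_univ, Fintype.card_fin,
    sum_const, card_univ, Fintype.card_fin, smul_eq_mul, Nat.mul_sub_one]

lemma Stable.sum_mrank_add_sum_wrank_le {ν : Fin n ≃ Fin n} (hν : P.Stable ν) :
    ∑ m, P.mrank m (ν m) + ∑ w, P.wrank w (ν.symm w) ≤ n * n - n := by
  rw [← card_mPrefers_partner, ← card_wPrefers_partner, ← card_union_of_disjoint,
    ← card_ne_partner ν]
  · refine card_le_card fun ⟨m, w⟩ hp => ?_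
    simp only [mem_union, mem_filter, mem_univ, true_and] at hp ⊢
    rintro rfl
    rcases hp with h | h <;> simp [mPrefers, wPrefers] at h
  · exact disjoint_filter.2 fun p _ h₁ h₂ => hν ⟨p.1, p.2, h₁, h₂⟩

end Profile

/-- For `n ≥ 3`, no profile satisfies both m-MaxProp and w-MaxProp. -/
theorem mMaxProp_wMaxProp_disjoint (n : ℕ) (hn : 3 ≤ n) (P : Profile n) :
    ¬ (P.MaxProp ∧ P.swap.MaxProp) := by
  rintro ⟨hmen, hwomen⟩
  have hstab : P.Stable P.swap.daMatching.symm :=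
    Profile.swap_stable_iff.1 P.swap.daMatching_stable
  have hopt : ∑ m, P.mrank m (P.daMatching m) ≤ ∑ m, P.mrank m (P.swap.daMatching.symm m) :=
    Finset.sum_le_sum fun m _ => Profile.mrank_daMatching_le hstab m
  have hcount := hstab.sum_mrank_add_sum_wrank_le
  rw [Equiv.symm_symm] at hcount
  rw [Profile.MaxProp, Profile.totalProposals_eq] at hmen hwomen
  rw [Profile.mrank_swap] at hwomen
  have : n * 3 ≤ n * n := Nat.mul_le_mul_left n hn
  omega
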